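/- arXiv:1609.08304 — 2 statements merged into one kernel-verified Lean document; each statement's English description precedes it below -/
import Mathlib

section
/- Let H be a real Hilbert space, V = H × ℝ, and let C = {(x,α) ∈ V : ‖x‖ ≤ α} be the Lorentz cone, with partial order (x,α) ≤_C (y,β) iff (y−x, β−α) ∈ C; its interior is C° = {(x,α) : ‖x‖ < α}. Then the inversion map g(x,α) = (α² − ‖x‖²)⁻¹ · (−x, α) maps C° bijectively onto C°, satisfies g(g(v)) = v and g(λv) = λ⁻¹g(v) for all λ > 0 and v ∈ C°, and for all v,w ∈ C° one has v ≤_C w if and only if g(w) ≤_C g(v); that is, g is a bijective antihomogeneous order-antimorphism of C°. -/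
/-!
Write `Q(x, α) = α² − ‖x‖²` for the Lorentz quadratic form, so that `g v = Q(v)⁻¹ • J v` with
`J(x, α) = (−x, α)`. Since `Q ∘ J = Q` and `Q` is 2-homogeneous, `Q(g v) = Q(v)⁻¹`, which gives
`g ∘ g = id` and antihomogeneity. Polarising `Q` yields `Q(g v − g w) = Q(w − v) / (Q(v) Q(w))`.
A vector lies in `C` iff `Q` and its time component are nonnegative, and the time component
`α / (α² − ‖x‖²)` of `g` decreases along `≤_C` (a one-variable inequality), so `v ≤_C w` implies
`g w ≤_C g v`; the converse is this implication applied to `g w ≤_C g v`.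
-/

open Set Filter Topology

theorem inv_sq_mul_self {G₀ : Type*} [CommGroupWithZero G₀] (a : G₀) : (a ^ 2)⁻¹ * a = a⁻¹ := by
  rw [inv_mul_eq_div, sq, div_self_mul_self']

noncomputable section Normed

variable {E : Type*} [SeminormedAddCommGroup E]

variable (E) in
def lorentzCone : Set (E × ℝ) := {p | ‖p.1‖ ≤ p.2}

def lorentzForm (p : E × ℝ) : ℝ := p.2 ^ 2 - ‖p.1‖ ^ 2

theorem interior_lorentzCone : interior (lorentzCone E) = {p | ‖p.1‖ < p.2} := by
  refine Subset.antisymm (fun p hp => ?_) <| interior_maximal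
    (fun p (hp : ‖p.1‖ < p.2) => show ‖p.1‖ ≤ p.2 from hp.le) (isOpen_lt (by fun_prop) (by fun_prop))
  have hlim : Tendsto (fun t : ℝ => (p.1, p.2 - t)) (𝓝[>] 0) (𝓝 p) :=
    ((by fun_prop : Continuous fun t : ℝ => (p.1, p.2 - t)).tendsto' 0 p (by simp)).mono_left
      nhdsWithin_le_nhds
  obtain ⟨t, (hmem : ‖p.1‖ ≤ p.2 - t), (ht : 0 < t)⟩ :=
    ((hlim.eventually (mem_interior_iff_mem_nhds.1 hp)).and self_mem_nhdsWithin).exists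
  show ‖p.1‖ < p.2
  linarith

theorem mem_lorentzCone_iff {p : E × ℝ} : p ∈ lorentzCone E ↔ 0 ≤ p.2 ∧ 0 ≤ lorentzForm p := by
  rw [lorentzForm, sub_nonneg]
  refine ⟨fun h => ?_, fun ⟨h₀, h⟩ => (sq_le_sq₀ (norm_nonneg _) h₀).1 h⟩
  have h₀ : 0 ≤ p.2 := (norm_nonneg _).trans h
  exact ⟨h₀, (sq_le_sq₀ (norm_nonneg _) h₀).2 h⟩

theorem lorentzForm_pos {p : E × ℝ} (hp : ‖p.1‖ < p.2) : 0 < lorentzForm p := by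
  have := norm_nonneg p.1
  unfold lorentzForm
  nlinarith

theorem lorentzForm_neg_fst (p : E × ℝ) : lorentzForm (-p.1, p.2) = lorentzForm p := by
  simp [lorentzForm]

variable [NormedSpace ℝ E]

def lorentzInv (p : E × ℝ) : E × ℝ := (lorentzForm p)⁻¹ • (-p.1, p.2)

theorem lorentzForm_smul (l : ℝ) (p : E × ℝ) : lorentzForm (l • p) = l ^ 2 * lorentzForm p := by
  simp only [lorentzForm, Prod.smul_fst, Prod.smul_snd, smul_eq_mul, norm_smul, Real.norm_eq_abs]
  rw [mul_pow, mul_pow, sq_abs]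
  ring

theorem lorentzForm_lorentzInv (p : E × ℝ) : lorentzForm (lorentzInv p) = (lorentzForm p)⁻¹ := by
  rw [lorentzInv, lorentzForm_smul, lorentzForm_neg_fst, inv_pow, inv_sq_mul_self]

theorem lorentzInv_lorentzInv {p : E × ℝ} (hp : lorentzForm p ≠ 0) :
    lorentzInv (lorentzInv p) = p := by
  rw [lorentzInv, lorentzForm_lorentzInv, inv_inv, lorentzInv]
  ext <;> simp [smul_smul, hp]

theorem lorentzInv_smul (l : ℝ) (p : E × ℝ) : lorentzInv (l • p) = l⁻¹ • lorentzInv p := by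
  have h : (-(l • p).1, (l • p).2) = l • (-p.1, p.2) := by simp
  rw [lorentzInv, lorentzInv, lorentzForm_smul, h, smul_smul, smul_smul, mul_inv, mul_right_comm,
    inv_sq_mul_self]

theorem mapsTo_lorentzInv :
    MapsTo lorentzInv {p : E × ℝ | ‖p.1‖ < p.2} {p | ‖p.1‖ < p.2} := by
  intro p (hp : ‖p.1‖ < p.2)
  have hQ := inv_pos.2 (lorentzForm_pos hp)
  show ‖(lorentzForm p)⁻¹ • -p.1‖ < (lorentzForm p)⁻¹ * p.2
  rw [norm_smul, norm_neg, Real.norm_of_nonneg hQ.le]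
  exact mul_lt_mul_of_pos_left hp hQ

end Normed

theorem div_sq_sub_sq_le_div_sq_sub_sq {a b r s : ℝ} (hr : 0 ≤ r) (hra : r < a) (hs : 0 ≤ s)
    (hsb : s < b) (hab : a ≤ b) (hsr : s ≤ r + (b - a)) :
    b / (b ^ 2 - s ^ 2) ≤ a / (a ^ 2 - r ^ 2) := by
  rw [div_le_div_iff₀ (by nlinarith) (by nlinarith)]
  have hs2 : s ^ 2 ≤ (r + (b - a)) ^ 2 := pow_le_pow_left₀ hs hsr 2
  nlinarith [mul_nonneg (sub_nonneg.2 hab) (sq_nonneg (a - r))]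

section Inner

variable {E : Type*} [SeminormedAddCommGroup E] [InnerProductSpace ℝ E]

theorem lorentzForm_lorentzInv_sub_lorentzInv {v w : E × ℝ} (hv : lorentzForm v ≠ 0)
    (hw : lorentzForm w ≠ 0) :
    lorentzForm (lorentzInv v - lorentzInv w) =
      lorentzForm (w - v) / (lorentzForm v * lorentzForm w) := by
  unfold lorentzForm at hv hw
  simp only [lorentzInv, lorentzForm, Prod.fst_sub, Prod.snd_sub, Prod.smul_fst, Prod.smul_snd,
    smul_eq_mul, smul_neg, neg_sub_neg, norm_sub_sq_real, norm_smul, real_inner_smul_left,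
    real_inner_smul_right, Real.norm_eq_abs, mul_pow, sq_abs]
  field_simp
  ring

theorem lorentzInv_sub_lorentzInv_mem_lorentzCone {v w : E × ℝ} (hv : ‖v.1‖ < v.2)
    (hw : ‖w.1‖ < w.2) (hvw : w - v ∈ lorentzCone E) :
    lorentzInv v - lorentzInv w ∈ lorentzCone E := by
  have hQv := lorentzForm_pos hv
  have hQw := lorentzForm_pos hw
  obtain ⟨hvw₂, hQvw⟩ := mem_lorentzCone_iff.1 hvw
  refine mem_lorentzCone_iff.2 ⟨?_, ?_⟩
  · have hdist : ‖w.1 - v.1‖ ≤ w.2 - v.2 := hvw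
    have hnorm : ‖w.1‖ ≤ ‖v.1‖ + (w.2 - v.2) :=
      (norm_le_norm_add_norm_sub' w.1 v.1).trans (by linarith)
    have := div_sq_sub_sq_le_div_sq_sub_sq (norm_nonneg _) hv (norm_nonneg _) hw
      (by simpa using hvw₂) hnorm
    simp only [lorentzInv, lorentzForm, Prod.snd_sub, Prod.smul_snd, smul_eq_mul, inv_mul_eq_div]
    linarith
  · rw [lorentzForm_lorentzInv_sub_lorentzInv hQv.ne' hQw.ne']
    positivity

theorem sub_mem_lorentzCone_iff_lorentzInv {v w : E × ℝ} (hv : ‖v.1‖ < v.2) (hw : ‖w.1‖ < w.2) :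
    w - v ∈ lorentzCone E ↔ lorentzInv v - lorentzInv w ∈ lorentzCone E := by
  refine ⟨lorentzInv_sub_lorentzInv_mem_lorentzCone hv hw, fun h => ?_⟩
  have := lorentzInv_sub_lorentzInv_mem_lorentzCone (mapsTo_lorentzInv hw) (mapsTo_lorentzInv hv) h
  rwa [lorentzInv_lorentzInv (lorentzForm_pos hv).ne',
    lorentzInv_lorentzInv (lorentzForm_pos hw).ne'] at this

end Inner

theorem lorentz_inversion_general
    {H : Type*} [NormedAddCommGroup H] [InnerProductSpace ℝ H] :
    let C : Set (H × ℝ) := {p | ‖p.1‖ ≤ p.2}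
    let g : H × ℝ → H × ℝ := fun p => (p.2 ^ 2 - ‖p.1‖ ^ 2)⁻¹ • (-p.1, p.2)
    interior C = {p : H × ℝ | ‖p.1‖ < p.2} ∧
    Set.BijOn g (interior C) (interior C) ∧
    (∀ v ∈ interior C, g (g v) = v) ∧
    (∀ l : ℝ, 0 < l → ∀ v ∈ interior C, g (l • v) = l⁻¹ • g v) ∧
    (∀ v ∈ interior C, ∀ w ∈ interior C, (w - v ∈ C ↔ g v - g w ∈ C)) := by
  intro C g
  rw [show interior C = {p : H × ℝ | ‖p.1‖ < p.2} from interior_lorentzCone]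
  have hinv : ∀ v ∈ {p : H × ℝ | ‖p.1‖ < p.2}, lorentzInv (lorentzInv v) = v :=
    fun v hv => lorentzInv_lorentzInv (lorentzForm_pos hv).ne'
  exact ⟨rfl, InvOn.bijOn ⟨hinv, hinv⟩ mapsTo_lorentzInv mapsTo_lorentzInv, hinv,
    fun l _ v _ => lorentzInv_smul l v, fun v hv w hw => sub_mem_lorentzCone_iff_lorentzInv hv hw⟩

/-- The inversion map `g(x,α) = (α² − ‖x‖²)⁻¹ (−x, α)` on the interior of the
Lorentz cone `C = {(x,α) : ‖x‖ ≤ α}` of a real Hilbert space `H` is a bijective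
antihomogeneous order-antimorphism of `C° = {(x,α) : ‖x‖ < α}` with `g ∘ g = id`. -/
theorem lorentz_inversion
    {H : Type*} [NormedAddCommGroup H] [InnerProductSpace ℝ H] [CompleteSpace H] :
    let C : Set (H × ℝ) := {p | ‖p.1‖ ≤ p.2}
    let g : H × ℝ → H × ℝ := fun p => (p.2 ^ 2 - ‖p.1‖ ^ 2)⁻¹ • (-p.1, p.2)
    interior C = {p : H × ℝ | ‖p.1‖ < p.2} ∧
    Set.BijOn g (interior C) (interior C) ∧
    (∀ v ∈ interior C, g (g v) = v) ∧
    (∀ l : ℝ, 0 < l → ∀ v ∈ interior C, g (l • v) = l⁻¹ • g v) ∧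
    (∀ v ∈ interior C, ∀ w ∈ interior C, (w - v ∈ C ↔ g v - g w ∈ C)) :=
  lorentz_inversion_general
end

section
/- Let (V,C,u) be an order unit space. A map g : C° → C° is an antihomogeneous order-antimorphism if and only if M(x/y) = M(g(y)/g(x)) for all x, y ∈ C°. -/
open Set Filter Topology

variable {V : Type*} [NormedAddCommGroup V] [NormedSpace ℝ V]

/-- `(V, C, u)` is an order unit space whose norm is the order unit norm of `(C, u)`:
`C` is an Archimedean cone and `u` is an order unit of it. -/
structure IsOrderUnitSpace (C : Set V) (u : V) : Prop where
  convex : Convex ℝ C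
  smul_mem : ∀ l : ℝ, 0 ≤ l → ∀ x ∈ C, l • x ∈ C
  salient : C ∩ (-C) = {0}
  archimedean : ∀ x : V, ∀ y ∈ C, (∀ n : ℕ, 0 < n → y - (n : ℝ) • x ∈ C) → -x ∈ C
  unit_mem : u ∈ C
  order_unit : ∀ x : V, ∃ l : ℝ, 0 ≤ l ∧ l • u - x ∈ C
  norm_eq : ∀ x : V, ‖x‖ = sInf {l : ℝ | 0 < l ∧ x + l • u ∈ C ∧ l • u - x ∈ C}

/-- `M(x/y) = inf {β > 0 : x ≤_C β y}`. -/
noncomputable def Mratio (C : Set V) (x y : V) : ℝ :=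
  sInf {b : ℝ | 0 < b ∧ b • y - x ∈ C}

/-- The cone `C` is strictly convex: the open segment between any two linearly
independent boundary points lies in the interior. -/
def StrictlyConvexCone (C : Set V) : Prop :=
  ∀ x ∈ frontier C, ∀ y ∈ frontier C, LinearIndependent ℝ ![x, y] →
    openSegment ℝ x y ⊆ interior C

/-- `g` is antihomogeneous on the interior of `C`: `g (λ x) = λ⁻¹ g x`. -/
def IsAntihomogeneous (C : Set V) (g : V → V) : Prop :=
  ∀ l : ℝ, 0 < l → ∀ x ∈ interior C, g (l • x) = l⁻¹ • g x

/-- `g` is an order-antimorphism of the interior of `C`: `x ≤_C y ↔ g y ≤_C g x`. -/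
def IsOrderAntimorphism (C : Set V) (g : V → V) : Prop :=
  ∀ x ∈ interior C, ∀ y ∈ interior C, (y - x ∈ C ↔ g x - g y ∈ C)

/-- A state of `(V, C, u)`: a positive linear functional with `φ u = 1`. -/
def IsState (C : Set V) (u : V) (φ : V →ₗ[ℝ] ℝ) : Prop :=
  (∀ x ∈ C, 0 ≤ φ x) ∧ φ u = 1

/-!
For `y ∈ C°` the infimum defining `M(x/y)` is attained, so `M(x/y) ≤ β ↔ x ≤_C β y` for every `β > 0`. Hence `M(x/y) = M(g y / g x)` says
exactly that `x ≤_C β y ↔ g y ≤_C β g x` for all `β > 0`. At `β = 1` this is the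
order-antimorphism property; comparing `x` with `λ x` at `β = λ⁻¹` and `β = λ` gives
`g (λ x) ≤_C λ⁻¹ g x ≤_C g (λ x)`, i.e. antihomogeneity. Conversely an antihomogeneous
order-antimorphism turns `x ≤_C β y` into `β⁻¹ g y = g (β y) ≤_C g x`.
-/

theorem Mratio_nonneg {C : Set V} (x y : V) : 0 ≤ Mratio C x y :=
  Real.sInf_nonneg fun _ hb => hb.1.le

namespace IsOrderUnitSpace

variable {C : Set V} {u : V}

theorem zero_mem (hC : IsOrderUnitSpace C u) : (0 : V) ∈ C := by
  simpa using hC.smul_mem 0 le_rfl u hC.unit_mem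

theorem add_mem (hC : IsOrderUnitSpace C u) {a b : V} (ha : a ∈ C) (hb : b ∈ C) :
    a + b ∈ C := by
  have hmid : (2⁻¹ : ℝ) • a + (2⁻¹ : ℝ) • b ∈ C :=
    hC.convex ha hb (by norm_num) (by norm_num) (by norm_num)
  convert hC.smul_mem 2 zero_le_two _ hmid using 1
  module

theorem smul_mem_iff (hC : IsOrderUnitSpace C u) {l : ℝ} (hl : 0 < l) {x : V} :
    l • x ∈ C ↔ x ∈ C := by
  refine ⟨fun hx => ?_, hC.smul_mem l hl.le x⟩
  simpa [smul_smul, inv_mul_cancel₀ hl.ne'] using hC.smul_mem l⁻¹ (inv_nonneg.2 hl.le) _ hx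

theorem eq_of_sub_mem_of_sub_mem (hC : IsOrderUnitSpace C u) {a b : V} (hab : a - b ∈ C)
    (hba : b - a ∈ C) : a = b := by
  have : a - b ∈ C ∩ -C := ⟨hab, by simpa using hba⟩
  rw [hC.salient] at this
  exact sub_eq_zero.1 this

open scoped Pointwise in
theorem smul_mem_interior (hC : IsOrderUnitSpace C u) {l : ℝ} (hl : 0 < l) {x : V}
    (hx : x ∈ interior C) : l • x ∈ interior C := by
  have hCl : l • C = C := by
    ext y
    rw [mem_smul_set_iff_inv_smul_mem₀ hl.ne', hC.smul_mem_iff (inv_pos.2 hl)]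
  rw [← hCl, interior_smul₀ hl.ne']
  exact smul_mem_smul_set hx

theorem exists_smul_sub_mem (hC : IsOrderUnitSpace C u) {y : V} (hy : y ∈ interior C)
    (x : V) : ∃ b : ℝ, 0 < b ∧ b • y - x ∈ C := by
  have hcont : Tendsto (fun t : ℝ => y - t • x) (𝓝 0) (𝓝 y) :=
    Continuous.tendsto' (by fun_prop) 0 y (by simp)
  have hnear : ∀ᶠ t in 𝓝[>] (0 : ℝ), y - t • x ∈ C :=
    nhdsWithin_le_nhds (hcont.eventually (mem_interior_iff_mem_nhds.1 hy))
  obtain ⟨t, ht, ht0⟩ := (hnear.and self_mem_nhdsWithin).exists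
  refine ⟨t⁻¹, inv_pos.2 ht0, ?_⟩
  convert hC.smul_mem t⁻¹ (inv_nonneg.2 ht0.le) _ ht using 1
  rw [smul_sub, smul_smul, inv_mul_cancel₀ ht0.ne', one_smul]

theorem smul_sub_mem_of_Mratio_lt (hC : IsOrderUnitSpace C u) {x y : V} {β : ℝ}
    (hy : y ∈ interior C) (h : Mratio C x y < β) : β • y - x ∈ C := by
  obtain ⟨b, ⟨-, hb⟩, hbβ⟩ := exists_lt_of_csInf_lt (hC.exists_smul_sub_mem hy x) h
  have hsplit : β • y - x = (β - b) • y + (b • y - x) := by module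
  rw [hsplit]
  exact hC.add_mem (hC.smul_mem _ (sub_nonneg.2 hbβ.le) _ (interior_subset hy)) hb

theorem Mratio_le_iff (hC : IsOrderUnitSpace C u) {x y : V} {β : ℝ} (hy : y ∈ interior C)
    (hβ : 0 < β) : Mratio C x y ≤ β ↔ β • y - x ∈ C := by
  refine ⟨fun h => ?_, fun h => csInf_le ⟨0, fun b hb => hb.1.le⟩ ⟨hβ, h⟩⟩
  -- `x ≤_C (β + 1/n) y` for every `n`, which the Archimedean axiom turns into `x ≤_C β y`.
  have hneg := hC.archimedean (x - β • y) y (interior_subset hy) fun n hn => by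
    have hn : (0 : ℝ) < n := Nat.cast_pos.2 hn
    have hlt : Mratio C x y < β + (n : ℝ)⁻¹ := by linarith [inv_pos.2 hn]
    convert hC.smul_mem n hn.le _ (hC.smul_sub_mem_of_Mratio_lt hy hlt) using 1
    conv_rhs => rw [smul_sub, smul_smul, mul_add, mul_inv_cancel₀ hn.ne']
    module
  rwa [neg_sub] at hneg

theorem Mratio_le_Mratio (hC : IsOrderUnitSpace C u) {x y x' y' : V} (hy : y ∈ interior C)
    (hy' : y' ∈ interior C) (H : ∀ β : ℝ, 0 < β → β • y - x ∈ C → β • y' - x' ∈ C) :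
    Mratio C x' y' ≤ Mratio C x y := by
  refine le_of_forall_pos_le_add fun ε hε => ?_
  have hpos : 0 < Mratio C x y + ε := add_pos_of_nonneg_of_pos (Mratio_nonneg x y) hε
  exact (hC.Mratio_le_iff hy' hpos).2
    (H _ hpos ((hC.Mratio_le_iff hy hpos).1 (le_add_of_nonneg_right hε.le)))

theorem Mratio_eq_Mratio_iff (hC : IsOrderUnitSpace C u) {x y x' y' : V}
    (hy : y ∈ interior C) (hy' : y' ∈ interior C) :
    Mratio C x y = Mratio C x' y' ↔ ∀ β : ℝ, 0 < β → (β • y - x ∈ C ↔ β • y' - x' ∈ C) :=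
  ⟨fun h β hβ => by rw [← hC.Mratio_le_iff hy hβ, ← hC.Mratio_le_iff hy' hβ, h],
    fun H => le_antisymm (hC.Mratio_le_Mratio hy' hy fun β hβ => (H β hβ).2)
      (hC.Mratio_le_Mratio hy hy' fun β hβ => (H β hβ).1)⟩

theorem antihomogeneous_and_orderAntimorphism_iff (hC : IsOrderUnitSpace C u) {g : V → V} :
    IsAntihomogeneous C g ∧ IsOrderAntimorphism C g ↔
      ∀ x ∈ interior C, ∀ y ∈ interior C, ∀ β : ℝ, 0 < β →
        (β • y - x ∈ C ↔ β • g x - g y ∈ C) := by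
  constructor
  · rintro ⟨hah, ham⟩ x hx y hy β hβ
    rw [ham x hx _ (hC.smul_mem_interior hβ hy), hah β hβ y hy, ← hC.smul_mem_iff hβ,
      smul_sub, smul_smul, mul_inv_cancel₀ hβ.ne', one_smul]
  · intro H
    refine ⟨fun l hl x hx => ?_, fun x hx y hy => by simpa using H x hx y hy 1 one_pos⟩
    have hlx := hC.smul_mem_interior hl hx
    have hle : l⁻¹ • g x - g (l • x) ∈ C := (H x hx _ hlx l⁻¹ (inv_pos.2 hl)).1 <| by
      simpa [smul_smul, inv_mul_cancel₀ hl.ne'] using hC.zero_mem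
    have hge : l • g (l • x) - g x ∈ C := (H _ hlx x hx l hl).1 (by simpa using hC.zero_mem)
    refine hC.eq_of_sub_mem_of_sub_mem ((hC.smul_mem_iff hl).1 ?_) hle
    rwa [smul_sub, smul_smul, mul_inv_cancel₀ hl.ne', one_smul]

end IsOrderUnitSpace

/-- **Lemma 2.1** (first part). A map `g : C° → C°` is an antihomogeneous
order-antimorphism iff `M(x/y) = M(g y / g x)` for all `x, y ∈ C°`. -/
theorem antihomogeneous_orderAntimorphism_iff_Mratio
    (C : Set V) (u : V) (hous : IsOrderUnitSpace C u)
    (g : V → V) (hg : Set.MapsTo g (interior C) (interior C)) :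
    (IsAntihomogeneous C g ∧ IsOrderAntimorphism C g) ↔
      ∀ x ∈ interior C, ∀ y ∈ interior C, Mratio C x y = Mratio C (g y) (g x) := by
  rw [hous.antihomogeneous_and_orderAntimorphism_iff]
  refine forall₂_congr fun x hx => forall₂_congr fun y hy => ?_
  exact (hous.Mratio_eq_Mratio_iff hy (hg hx)).symm
end
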